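/- Let A_1, …, A_k be pairwise commuting N×N matrices with nonnegative integer entries forming an irreducible family, with every row sum of every A_i at least 2, let ρ_i be the spectral radius of A_i, let x ∈ (0,∞)^N be the unimodular Perron–Frobenius eigenvector, and fix δ ∈ (0,1). Then for every real s, the series ζ_δ(s) = Σ_{λ ∈ FB} w_δ(λ)^s converges if and only if s > δ. -/

import Mathlib

open scoped Classical ENNReal Topology
open TopologicalSpace MeasureTheory Filter Set
open scoped Fin.NatCast

namespace KBratteli

variable (k N : ℕ) [NeZero k] (A : Fin k → Matrix (Fin N) (Fin N) ℕ)

/-- An edge at level `n` of the stationary `k`-Bratteli diagram of the matrices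
`A 0, …, A (k-1)`: an element of `Edge k N A n` is an edge whose source lies in the
level-`(n+1)` vertex set and whose range lies in the level-`n` vertex set (both copies of
`Fin N`); there are exactly `A (n % k) p q` edges with range `p` and source `q`. -/
structure Edge (n : ℕ) : Type where
  rg : Fin N
  src : Fin N
  idx : Fin (A (n : Fin k) rg src)

/-- The infinite path space `X_B` of the stationary `k`-Bratteli diagram of `A`. -/
def PathSpace : Type :=
  { x : (n : ℕ) → Edge k N A n // ∀ n, (x n).src = (x (n + 1)).rg }

/-- A finite path of length `ℓ` beginning at level `0`: a composable string of edges,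
together with the vertices it visits.  Length-`0` paths are vertices of `V₀`. -/
structure FinPath (ℓ : ℕ) : Type where
  vtx : Fin (ℓ + 1) → Fin N
  edge : (i : Fin ℓ) → Edge k N A i
  rg_eq : ∀ i : Fin ℓ, (edge i).rg = vtx i.castSucc
  src_eq : ∀ i : Fin ℓ, (edge i).src = vtx i.succ

/-- `FB`: the set of all finite paths (of all lengths) beginning at level `0`. -/
abbrev FB : Type := Σ ℓ : ℕ, FinPath k N A ℓ

variable {k N A}

/-- The source (final) vertex of a finite path. -/
def FinPath.src {ℓ : ℕ} (lam : FinPath k N A ℓ) : Fin N := lam.vtx (Fin.last ℓ)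

/-- The range (initial, level-0) vertex of a finite path. -/
def FinPath.rg {ℓ : ℕ} (lam : FinPath k N A ℓ) : Fin N := lam.vtx 0

/-- The length-0 finite path at the level-0 vertex `v`. -/
def vertexPath (v : Fin N) : FinPath k N A 0 where
  vtx := fun _ => v
  edge := fun i => i.elim0
  rg_eq := fun i => i.elim0
  src_eq := fun i => i.elim0

/-- The cylinder set `[λ]` of a finite path `λ`: all infinite paths with initial
segment `λ`. -/
def Cyl {ℓ : ℕ} (lam : FinPath k N A ℓ) : Set (PathSpace k N A) :=
  { x | (x.1 0).rg = lam.rg ∧ ∀ i : Fin ℓ, x.1 i = lam.edge i }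

variable (k N A) in
/-- The collection of all cylinder sets. -/
def cylinderSets : Set (Set (PathSpace k N A)) :=
  { S | ∃ (ℓ : ℕ) (lam : FinPath k N A ℓ), S = Cyl lam }

/-- The cylinder-set topology on the infinite path space. -/
instance : TopologicalSpace (PathSpace k N A) :=
  generateFrom (cylinderSets k N A)

/-- The Borel σ-algebra of the cylinder-set topology. -/
instance : MeasurableSpace (PathSpace k N A) := borel _

instance : BorelSpace (PathSpace k N A) := ⟨rfl⟩

lemma isOpen_cyl {ℓ : ℕ} (lam : FinPath k N A ℓ) : IsOpen (Cyl lam) :=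
  isOpen_generateFrom_of_mem ⟨ℓ, lam, rfl⟩

lemma measurableSet_cyl {ℓ : ℕ} (lam : FinPath k N A ℓ) : MeasurableSet (Cyl lam) :=
  (isOpen_cyl lam).measurableSet

/-- Edges form a finite type. -/
def edgeEquiv (n : ℕ) : Edge k N A n ≃ Σ p : Fin N, Σ q : Fin N, Fin (A (n : Fin k) p q) where
  toFun e := ⟨e.rg, e.src, e.idx⟩
  invFun t := ⟨t.1, t.2.1, t.2.2⟩
  left_inv e := rfl
  right_inv t := rfl

instance (n : ℕ) : Finite (Edge k N A n) := by
  have : ∀ p : Fin N, Finite (Σ q : Fin N, Fin (A (n : Fin k) p q)) := fun p => Finite.instSigma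
  exact Finite.of_equiv _ (edgeEquiv n).symm

instance (ℓ : ℕ) : Finite (FinPath k N A ℓ) := by
  have hinj : Function.Injective
      (fun lam : FinPath k N A ℓ => (lam.vtx, lam.edge)) := by
    rintro ⟨v, e, h1, h2⟩ ⟨v', e', h1', h2'⟩ h
    simp only [Prod.mk.injEq] at h
    obtain ⟨hv, he⟩ := h
    subst hv; subst he; rfl
  exact Finite.of_injective _ hinj

instance : Countable (FB k N A) := by infer_instance

/-- The initial segment of length `m` of an infinite path. -/
def prefixPath (x : PathSpace k N A) (m : ℕ) : FinPath k N A m where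
  vtx := fun i => (x.1 i).rg
  edge := fun i => x.1 i
  rg_eq := fun _ => rfl
  src_eq := fun i => x.2 i

lemma mem_cyl_prefixPath (x : PathSpace k N A) (m : ℕ) : x ∈ Cyl (prefixPath x m) :=
  ⟨rfl, fun _ => rfl⟩

lemma measurableSet_coord (j : ℕ) (P : Edge k N A j → Prop) :
    MeasurableSet { x : PathSpace k N A | P (x.1 j) } := by
  have h : { x : PathSpace k N A | P (x.1 j) }
      = ⋃ (lam : FinPath k N A (j + 1)) (_ : P (lam.edge (Fin.last j))), Cyl lam := by
    ext x
    simp only [Set.mem_setOf_eq, Set.mem_iUnion]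
    constructor
    · intro hx
      exact ⟨prefixPath x (j + 1), hx, mem_cyl_prefixPath x (j + 1)⟩
    · rintro ⟨lam, hP, -, hedge⟩
      have hx : x.1 j = lam.edge (Fin.last j) := hedge (Fin.last j)
      rw [hx]; exact hP
  rw [h]
  exact MeasurableSet.iUnion fun lam => MeasurableSet.iUnion fun _ => measurableSet_cyl lam

/-- The first level at which two infinite paths differ. -/
noncomputable def firstDiff (x y : PathSpace k N A) : ℕ := sInf { n | x.1 n ≠ y.1 n }

/-- The function `d_w` associated to a weight-type function `w` on finite paths:
`d_w(x,x) = 0`; `d_w(x,y) = 1` if `x` and `y` have no common initial sub-path (i.e. they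
do not even start at the same level-0 vertex); and otherwise `d_w(x,y) = w(x ∧ y)`, the
value of `w` on the longest common initial sub-path of `x` and `y`. -/
noncomputable def distW (w : FB k N A → ℝ) (x y : PathSpace k N A) : ℝ :=
  if x = y then 0
  else if (x.1 0).rg = (y.1 0).rg then w ⟨firstDiff x y, prefixPath x (firstDiff x y)⟩
  else 1

/-- `η` is an (initial) sub-path of `λ`. -/
def IsSubPath {m ℓ : ℕ} (η : FinPath k N A m) (lam : FinPath k N A ℓ) : Prop :=
  ∃ h : m ≤ ℓ, η.rg = lam.rg ∧ ∀ i : Fin m, η.edge i = lam.edge (Fin.castLE h i)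

/-- `lam ∈ F_γ B` : the finite path `lam` extends `γ`. -/
def Extends {m : ℕ} (γ : FinPath k N A m) (lam : FB k N A) : Prop :=
  IsSubPath γ lam.2

/-- The spectral radius of a matrix of nonnegative integers, as a real number. -/
noncomputable def specRad {N : ℕ} (M : Matrix (Fin N) (Fin N) ℕ) : ℝ :=
  (spectralRadius ℂ (M.map (Nat.cast : ℕ → ℂ))).toReal

/-- The weight `w_δ` on the stationary `k`-Bratteli diagram of `A`, relative to data
`ρ : Fin k → ℝ` (the spectral radii) and `xv : Fin N → ℝ` (the Perron–Frobenius
eigenvector): on a path `η` of length `q·k + t` (`0 ≤ t ≤ k-1`) it is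
`(ρ₁^{q+1} ⋯ ρ_t^{q+1} · ρ_{t+1}^q ⋯ ρ_k^q)^{-1/δ} · xv (s η)`. -/
noncomputable def wt (δ : ℝ) (ρ : Fin k → ℝ) (xv : Fin N → ℝ) (lam : FB k N A) : ℝ :=
  (∏ i : Fin k, ρ i ^ (if (i : ℕ) < lam.1 % k then lam.1 / k + 1 else lam.1 / k))
      ^ (-(1 / δ)) * xv lam.2.src

/-- The value `M([λ]) = (ρ₁⋯ρ_t)^{-(q+1)} (ρ_{t+1}⋯ρ_k)^{-q} · x_{s(λ)}` of the
measure `M` on the cylinder set of a path of length `q·k + t`. -/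
noncomputable def Mval (ρ : Fin k → ℝ) (xv : Fin N → ℝ) (lam : FB k N A) : ℝ :=
  (∏ i : Fin k, ρ i ^ (if (i : ℕ) < lam.1 % k then lam.1 / k + 1 else lam.1 / k))⁻¹
    * xv lam.2.src

/-- A family of matrices is irreducible if for every pair of indices some finite product
of matrices from the family has positive corresponding entry. -/
def IrreducibleFamily {k N : ℕ} (A : Fin k → Matrix (Fin N) (Fin N) ℕ) : Prop :=
  ∀ a b : Fin N, ∃ l : List (Fin k), 0 < (l.map A).prod a b

/-- A single square matrix with nonnegative integer entries is irreducible if for every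
pair of indices some positive power has positive corresponding entry. -/
def MatIrreducible {N : ℕ} (B : Matrix (Fin N) (Fin N) ℕ) : Prop :=
  ∀ a b : Fin N, ∃ m : ℕ, 0 < m ∧ 0 < (B ^ m) a b

/-- The diameter (in `ℝ≥0∞`) of a set of infinite paths relative to `d_w`. -/
noncomputable def diamW (w : FB k N A → ℝ) (U : Set (PathSpace k N A)) : ℝ≥0∞ :=
  ⨆ (x) (_ : x ∈ U) (y) (_ : y ∈ U), ENNReal.ofReal (distW w x y)

/-- The `t`-dimensional Hausdorff (outer) measure of a set `Z` relative to the metric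
`d_w`: `H^t(Z) = lim_{ε → 0} inf { Σᵢ (diam Uᵢ)^t : Z ⊆ ⋃ᵢ Uᵢ, diam Uᵢ < ε }`. -/
noncomputable def hausW (w : FB k N A → ℝ) (t : ℝ) (Z : Set (PathSpace k N A)) : ℝ≥0∞ :=
  ⨆ (ε : ℝ≥0∞) (_ : 0 < ε),
    ⨅ (U : ℕ → Set (PathSpace k N A)) (_ : Z ⊆ ⋃ n, U n)
      (_ : ∀ n, diamW w (U n) < ε), ∑' n, diamW w (U n) ^ t

lemma natCast_mul_add (n i : ℕ) : ((n * k + i : ℕ) : Fin k) = (i : Fin k) := by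
  push_cast
  simp [Fin.natCast_self]

/-- Transport of edges between levels governed by the same matrix (the diagram is
stationary with period `k`). -/
def Edge.cast {i j : ℕ} (h : (i : Fin k) = (j : Fin k)) (e : Edge k N A i) :
    Edge k N A j where
  rg := e.rg
  src := e.src
  idx := Fin.cast (by rw [h]) e.idx

/-- The cylinder set `[γ e]` of a finite path `γ` (of length `m`) extended by one
further edge `e` at level `m`. -/
def cylExt {m : ℕ} (γ : FinPath k N A m) (e : Edge k N A m) : Set (PathSpace k N A) :=
  Cyl γ ∩ { x | x.1 m = e }

lemma measurableSet_cylExt {m : ℕ} (γ : FinPath k N A m) (e : Edge k N A m) :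
    MeasurableSet (cylExt γ e) :=
  (measurableSet_cyl γ).inter (measurableSet_coord m fun f => f = e)

/-- The cylinder set `[λ μ]` of the concatenation of `λ ∈ F^{nk}B` with `μ ∈ F^{k}B`
(the diagram being stationary of period `k`, `μ` concatenates onto `λ`). -/
def cylCat {n : ℕ} (lam : FinPath k N A (n * k)) (η : FinPath k N A k) :
    Set (PathSpace k N A) :=
  Cyl lam ∩ { x | (x.1 (n * k)).rg = η.rg } ∩
    ⋂ i : Fin k,
      { x | x.1 (n * k + (i : ℕ)) = Edge.cast (natCast_mul_add n (i : ℕ)).symm (η.edge i) }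

lemma measurableSet_cylCat {n : ℕ} (lam : FinPath k N A (n * k)) (η : FinPath k N A k) :
    MeasurableSet (cylCat lam η) :=
  ((measurableSet_cyl lam).inter
      (measurableSet_coord (n * k) (fun e => e.rg = η.rg))).inter
    (MeasurableSet.iInter fun i => measurableSet_coord (n * k + (i : ℕ))
      (fun e => e = Edge.cast (natCast_mul_add n (i : ℕ)).symm (η.edge i)))



end KBratteli

/-!
Row sums at least `2` force `ρ_i ≥ 2`: evaluate `A_i x = ρ_i x` at a coordinate where `x` is
smallest. Because `x` is a common eigenvector, summing `x_{s(λ)}` over the paths of length `ℓ`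
gives `P_ℓ · Σ_v x_v` with `P_ℓ = ρ_{0} ρ_{1} ⋯ ρ_{ℓ-1}` (indices mod `k`), while
`w_δ(λ) = P_{|λ|}^{-1/δ} x_{s(λ)}`. As `x_v^s` and `x_v` are comparable, `ζ_δ(s)` converges iff
`Σ_ℓ P_ℓ^{1 - s/δ}` does, and `P_ℓ ≥ 2^ℓ` makes this happen exactly when `s > δ`.
-/

open Finset

theorem Matrix.le_of_mulVec_eq_smul_of_le_sum_row {n : Type*} [Fintype n] [Nonempty n]
    {M : Matrix n n ℝ} {x : n → ℝ} {μ r : ℝ} (hM : ∀ a b, 0 ≤ M a b) (hx : ∀ v, 0 < x v)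
    (heig : M.mulVec x = μ • x) (hrow : ∀ a, r ≤ ∑ b, M a b) : r ≤ μ := by
  obtain ⟨v, hv⟩ := Finite.exists_min x
  refine le_of_mul_le_mul_right ?_ (hx v)
  calc r * x v ≤ (∑ b, M v b) * x v := mul_le_mul_of_nonneg_right (hrow v) (hx v).le
    _ = ∑ b, M v b * x v := sum_mul _ _ _
    _ ≤ ∑ b, M v b * x b := sum_le_sum fun b _ => mul_le_mul_of_nonneg_left (hv b) (hM v b)
    _ = μ * x v := by simpa [Matrix.mulVec, dotProduct] using congrFun heig v

theorem exists_pos_mul_le_and_le_mul {ι : Type*} [Finite ι] {f g : ι → ℝ}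
    (hf : ∀ i, 0 < f i) (hg : ∀ i, 0 < g i) :
    ∃ c > 0, ∃ C, ∀ i, c * f i ≤ g i ∧ g i ≤ C * f i := by
  cases isEmpty_or_nonempty ι
  · exact ⟨1, one_pos, 1, fun i => isEmptyElim i⟩
  obtain ⟨i₀, hi₀⟩ := Finite.exists_min fun i => g i / f i
  obtain ⟨i₁, hi₁⟩ := Finite.exists_max fun i => g i / f i
  refine ⟨g i₀ / f i₀, div_pos (hg i₀) (hf i₀), g i₁ / f i₁, fun i => ⟨?_, ?_⟩⟩
  · exact (le_div_iff₀ (hf i)).mp (hi₀ i)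
  · exact (div_le_iff₀ (hf i)).mp (hi₁ i)

theorem summable_iff_of_mul_le_of_le_mul {ι : Type*} {f g : ι → ℝ} {c C : ℝ} (hc : 0 < c)
    (hf : ∀ i, 0 ≤ f i) (hlow : ∀ i, c * f i ≤ g i) (hup : ∀ i, g i ≤ C * f i) :
    Summable g ↔ Summable f := by
  refine ⟨fun hg => (hg.div_const c).of_nonneg_of_le hf fun i => ?_,
    fun hf' => (hf'.mul_left C).of_nonneg_of_le (fun i => ?_) hup⟩
  · rw [le_div_iff₀ hc, mul_comm]; exact hlow i
  · exact (mul_nonneg hc.le (hf i)).trans (hlow i)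

theorem summable_rpow_iff_of_two_pow_le {P : ℕ → ℝ} (hP : ∀ n, 2 ^ n ≤ P n) (e : ℝ) :
    Summable (fun n => P n ^ e) ↔ e < 0 := by
  have hP1 : ∀ n, 1 ≤ P n := fun n => (one_le_pow₀ one_le_two).trans (hP n)
  constructor
  · intro hsum
    by_contra! he
    have hlim := hsum.tendsto_atTop_zero
    have hge : ∀ n, 1 ≤ P n ^ e := fun n => Real.one_le_rpow (hP1 n) he
    exact absurd (ge_of_tendsto' hlim hge) (by norm_num)
  · intro he
    refine (summable_geometric_of_lt_one (by positivity)
      (Real.rpow_lt_one_of_one_lt_of_neg one_lt_two he)).of_nonneg_of_le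
      (fun n => Real.rpow_nonneg (zero_le_one.trans (hP1 n)) e) fun n => ?_
    calc P n ^ e ≤ ((2 : ℝ) ^ n) ^ e := Real.rpow_le_rpow_of_nonpos (by positivity) (hP n) he.le
      _ = (2 ^ e) ^ n := by
        rw [← Real.rpow_natCast, ← Real.rpow_natCast, ← Real.rpow_mul zero_le_two,
          ← Real.rpow_mul zero_le_two, mul_comm]

theorem prod_range_natCast_eq_prod_pow {k : ℕ} [NeZero k] {M : Type*} [CommMonoid M]
    (ρ : Fin k → M) (ℓ : ℕ) :
    ∏ j ∈ range ℓ, ρ j = ∏ i : Fin k, ρ i ^ (if (i : ℕ) < ℓ % k then ℓ / k + 1 else ℓ / k) := by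
  rw [← prod_fiberwise (range ℓ) (fun j : ℕ => (j : Fin k))]
  refine prod_congr rfl fun i _ => ?_
  rw [prod_congr rfl fun j hj => congrArg ρ (mem_filter.mp hj).2, prod_const]
  congr 1
  have hk : 0 < k := Nat.pos_of_ne_zero (NeZero.ne k)
  have hcount := Nat.count_modEq_card (r := k) (b := ℓ) hk i
  rw [Nat.count_eq_card_filter_range, Nat.mod_eq_of_lt i.isLt] at hcount
  convert hcount using 2
  · ext j
    simp [Fin.ext_iff, Fin.val_natCast, Nat.ModEq, Nat.mod_eq_of_lt i.isLt]
  · split_ifs <;> rfl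

namespace KBratteli

section Paths

variable {k N : ℕ} [NeZero k] {A : Fin k → Matrix (Fin N) (Fin N) ℕ}

noncomputable instance (n : ℕ) : Fintype (Edge k N A n) := Fintype.ofFinite _

noncomputable instance (ℓ : ℕ) : Fintype (FinPath k N A ℓ) := Fintype.ofFinite _

attribute [ext] FinPath

def FinPath.init {ℓ : ℕ} (μ : FinPath k N A (ℓ + 1)) : FinPath k N A ℓ where
  vtx i := μ.vtx i.castSucc
  edge i := μ.edge i.castSucc
  rg_eq i := μ.rg_eq i.castSucc
  src_eq i := by rw [μ.src_eq, Fin.succ_castSucc]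

def FinPath.snoc {ℓ : ℕ} (lam : FinPath k N A ℓ) (e : Edge k N A ℓ) (he : e.rg = lam.src) :
    FinPath k N A (ℓ + 1) where
  vtx := Fin.snoc lam.vtx e.src
  edge := Fin.snoc (α := fun i : Fin (ℓ + 1) => Edge k N A i) lam.edge e
  rg_eq i := by
    refine Fin.lastCases ?_ (fun j => ?_) i
    · simpa [Fin.snoc_last, Fin.snoc_castSucc, FinPath.src] using he
    · simpa [Fin.snoc_castSucc] using lam.rg_eq j
  src_eq i := by
    refine Fin.lastCases ?_ (fun j => ?_) i
    · simp [Fin.snoc_last, Fin.succ_last]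
    · simpa [-Fin.castSucc_succ, Fin.succ_castSucc, Fin.snoc_castSucc] using lam.src_eq j

def FinPath.snocEquiv (ℓ : ℕ) :
    FinPath k N A (ℓ + 1) ≃ Σ lam : FinPath k N A ℓ, {e : Edge k N A ℓ // e.rg = lam.src} where
  toFun μ := ⟨μ.init, μ.edge (Fin.last ℓ), μ.rg_eq (Fin.last ℓ)⟩
  invFun p := p.1.snoc p.2.1 p.2.2
  left_inv μ := by
    ext i
    · refine Fin.lastCases ?_ (fun j => ?_) i
      · simp [FinPath.snoc, Fin.snoc_last, μ.src_eq (Fin.last ℓ), Fin.succ_last]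
      · simp [FinPath.snoc, FinPath.init, Fin.snoc_castSucc]
    · refine Fin.lastCases ?_ (fun j => ?_) i
      · simp [FinPath.snoc, Fin.snoc_last]
      · simp [FinPath.snoc, FinPath.init, Fin.snoc_castSucc]
  right_inv p := by
    refine Sigma.subtype_ext ?_ ?_
    · ext i
      · simp [FinPath.snoc, FinPath.init, Fin.snoc_castSucc]
      · simp [FinPath.snoc, FinPath.init, Fin.snoc_castSucc]
    · exact Fin.snoc_last (α := fun i : Fin (ℓ + 1) => Edge k N A i) _ _

def FinPath.equivVertex : FinPath k N A 0 ≃ Fin N where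
  toFun μ := μ.src
  invFun := vertexPath
  left_inv μ := by
    ext i
    · rw [Subsingleton.elim (α := Fin 1) i (Fin.last 0)]; rfl
    · exact i.elim0
  right_inv v := rfl

def Edge.rgEqEquiv (n : ℕ) (v : Fin N) :
    {e : Edge k N A n // e.rg = v} ≃ Σ b, Fin (A (n : Fin k) v b) where
  toFun e := ⟨e.1.src, Fin.cast (by rw [e.2]) e.1.idx⟩
  invFun t := ⟨⟨v, t.1, t.2⟩, rfl⟩
  left_inv := by rintro ⟨⟨r, s, i⟩, rfl⟩; rfl
  right_inv _ := rfl

theorem sum_edge_rg_eq_src {M : Type*} [AddCommMonoid M] (n : ℕ) (v : Fin N) (f : Fin N → M) :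
    ∑ e : {e : Edge k N A n // e.rg = v}, f e.1.src = ∑ b, A (n : Fin k) v b • f b := by
  rw [Fintype.sum_equiv (Edge.rgEqEquiv n v) (fun e => f e.1.src) (fun t => f t.1) fun _ => rfl,
    Fintype.sum_sigma]
  simp

theorem sum_finPath_succ_src {M : Type*} [AddCommMonoid M] (ℓ : ℕ) (f : Fin N → M) :
    ∑ μ : FinPath k N A (ℓ + 1), f μ.src
      = ∑ lam : FinPath k N A ℓ, ∑ b, A (ℓ : Fin k) lam.src b • f b := by
  rw [Fintype.sum_equiv (FinPath.snocEquiv ℓ) _ (fun p => f p.2.1.src) fun μ => ?_,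
    Fintype.sum_sigma]
  · exact sum_congr rfl fun lam _ => sum_edge_rg_eq_src ℓ lam.src f
  · change f μ.src = f (μ.edge (Fin.last ℓ)).src
    rw [μ.src_eq, Fin.succ_last]; rfl

end Paths

section Weights

variable {k N : ℕ} [NeZero k] {A : Fin k → Matrix (Fin N) (Fin N) ℕ}

theorem sum_finPath_src_eq_prod_mul_sum {ρ : Fin k → ℝ} {x : Fin N → ℝ}
    (hxeig : ∀ i, ((A i).map (Nat.cast : ℕ → ℝ)).mulVec x = ρ i • x) (ℓ : ℕ) :
    ∑ μ : FinPath k N A ℓ, x μ.src = (∏ j ∈ range ℓ, ρ j) * ∑ v, x v := by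
  induction ℓ with
  | zero =>
    rw [prod_range_zero, one_mul]
    exact Fintype.sum_equiv FinPath.equivVertex (fun μ => x μ.src) x fun _ => rfl
  | succ ℓ ih =>
    have hrow : ∀ a, ∑ b, A (ℓ : Fin k) a b • x b = ρ ℓ * x a := fun a => by
      simpa [Matrix.mulVec, dotProduct, nsmul_eq_mul] using congrFun (hxeig ℓ) a
    simp_rw [sum_finPath_succ_src, hrow, ← mul_sum, ih, prod_range_succ]
    ring

theorem wt_eq_prod_range_rpow_mul (δ : ℝ) (ρ : Fin k → ℝ) (x : Fin N → ℝ) (lam : FB k N A) :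
    wt δ ρ x lam = (∏ j ∈ range lam.1, ρ j) ^ (-(1 / δ)) * x lam.2.src := by
  rw [wt, prod_range_natCast_eq_prod_pow]

theorem summable_wt_rpow_iff [NeZero N] {ρ : Fin k → ℝ} {x : Fin N → ℝ} (hρ : ∀ i, 0 < ρ i)
    (hxpos : ∀ v, 0 < x v) (hxeig : ∀ i, ((A i).map (Nat.cast : ℕ → ℝ)).mulVec x = ρ i • x)
    (δ s : ℝ) :
    Summable (fun lam : FB k N A => wt δ ρ x lam ^ s)
      ↔ Summable (fun ℓ => (∏ j ∈ range ℓ, ρ j) ^ (1 - s / δ)) := by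
  set P : ℕ → ℝ := fun ℓ => ∏ j ∈ range ℓ, ρ j
  have hPpos : ∀ ℓ, 0 < P ℓ := fun ℓ => prod_pos fun j _ => hρ j
  have hPs : ∀ ℓ, 0 ≤ P ℓ ^ (-(s / δ)) := fun ℓ => Real.rpow_nonneg (hPpos ℓ).le _
  have hwt : ∀ lam : FB k N A, wt δ ρ x lam ^ s = P lam.1 ^ (-(s / δ)) * x lam.2.src ^ s :=
    fun lam => by
      rw [wt_eq_prod_range_rpow_mul, Real.mul_rpow (Real.rpow_nonneg (hPpos _).le _) (hxpos _).le,
        ← Real.rpow_mul (hPpos _).le, neg_mul, one_div_mul_eq_div]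
  have hfiber : ∀ ℓ, ∑' μ : FinPath k N A ℓ, P ℓ ^ (-(s / δ)) * x μ.src
      = (∑ v, x v) * P ℓ ^ (1 - s / δ) := fun ℓ => by
    rw [tsum_fintype, ← mul_sum, sum_finPath_src_eq_prod_mul_sum hxeig, sub_eq_neg_add,
      Real.rpow_add (hPpos ℓ), Real.rpow_one]
    ring
  have hnonneg : ∀ lam : FB k N A, 0 ≤ P lam.1 ^ (-(s / δ)) * x lam.2.src :=
    fun lam => mul_nonneg (hPs _) (hxpos _).le
  obtain ⟨c, hc, C, hcC⟩ :=
    exists_pos_mul_le_and_le_mul hxpos fun v => Real.rpow_pos_of_pos (hxpos v) s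
  rw [summable_iff_of_mul_le_of_le_mul hc hnonneg
      (fun lam => by rw [hwt, mul_left_comm]; exact mul_le_mul_of_nonneg_left (hcC _).1 (hPs _))
      (fun lam => by rw [hwt, mul_left_comm C]; exact mul_le_mul_of_nonneg_left (hcC _).2 (hPs _)),
    summable_sigma_of_nonneg hnonneg]
  simp only [hfiber, summable_mul_left_iff (sum_pos (fun v _ => hxpos v) univ_nonempty).ne']
  exact and_iff_right fun ℓ => Summable.of_finite

end Weights

theorem statement6_general (k N : ℕ) [NeZero k] [NeZero N]
    (A : Fin k → Matrix (Fin N) (Fin N) ℕ)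
    (hrow : ∀ (i : Fin k) (a : Fin N), 2 ≤ ∑ b, A i a b)
    (ρ : Fin k → ℝ)
    (x : Fin N → ℝ) (hxpos : ∀ v, 0 < x v)
    (hxeig : ∀ i, ((A i).map (Nat.cast : ℕ → ℝ)).mulVec x = ρ i • x)
    (δ : ℝ) (hδ : δ ∈ Set.Ioo (0 : ℝ) 1) :
    ∀ s : ℝ, Summable (fun lam : FB k N A => wt δ ρ x lam ^ s) ↔ δ < s := by
  intro s
  have hρ : ∀ i, 2 ≤ ρ i := fun i =>
    Matrix.le_of_mulVec_eq_smul_of_le_sum_row (fun _ _ => Nat.cast_nonneg _) hxpos (hxeig i)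
      fun a => by simpa using (Nat.cast_le (α := ℝ)).mpr (hrow i a)
  have hP : ∀ ℓ, 2 ^ ℓ ≤ ∏ j ∈ range ℓ, ρ j := fun ℓ => by
    simpa using prod_le_prod (s := range ℓ) (fun _ _ => zero_le_two) fun j _ => hρ j
  rw [summable_wt_rpow_iff (fun i => two_pos.trans_le (hρ i)) hxpos hxeig,
    summable_rpow_iff_of_two_pow_le hP, sub_neg, one_lt_div hδ.1]

/-- For an irreducible family of pairwise commuting matrices with all
row sums at least 2, and the weight `w_δ` (built from the spectral radii and the
unimodular Perron–Frobenius eigenvector), the ζ-function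
`ζ_δ(s) = Σ_{λ ∈ FB} w_δ(λ)^s` converges exactly for real `s > δ`. -/
theorem statement6 (k N : ℕ) [NeZero k] [NeZero N]
    (A : Fin k → Matrix (Fin N) (Fin N) ℕ)
    (hcomm : ∀ i j, A i * A j = A j * A i)
    (hirr : IrreducibleFamily A)
    (hrow : ∀ (i : Fin k) (a : Fin N), 2 ≤ ∑ b, A i a b)
    (ρ : Fin k → ℝ) (hρ : ∀ i, ρ i = specRad (A i))
    (x : Fin N → ℝ) (hxpos : ∀ v, 0 < x v) (hxsum : ∑ v, x v = 1)
    (hxeig : ∀ i, ((A i).map (Nat.cast : ℕ → ℝ)).mulVec x = ρ i • x)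
    (δ : ℝ) (hδ : δ ∈ Set.Ioo (0 : ℝ) 1) :
    ∀ s : ℝ, Summable (fun lam : FB k N A => wt δ ρ x lam ^ s) ↔ δ < s :=
  statement6_general k N A hrow ρ x hxpos hxeig δ hδ

end KBratteli
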